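/- Let ω₁, ω₂ ∈ ℂ with Im(ω₁/ω₂) > 0, Λ = {m·ω₁ + n·ω₂ : m, n ∈ ℤ}, and R = {r ∈ ℂ : r·Λ ⊆ Λ}. Fix O ∈ ℂ/Λ. On R × (ℂ/Λ) define the multiplication (r, A)·(s, B) = (r·s, A − r̄(O) + r̄(B)), where r̄ : ℂ/Λ → ℂ/Λ is the map induced by multiplication by r. Then this multiplication is associative and distributes on both sides over the componentwise heap operation [(r,A),(s,B),(t,C)] = (r − s + t, A − B + C), making R × (ℂ/Λ) a truss. -/
import Mathlib


/-- The lattice `Λ(ω₁, ω₂) = {m·ω₁ + n·ω₂ : m, n ∈ ℤ}` as an additive subgroup of `ℂ`. -/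
noncomputable def lattice (ω₁ ω₂ : ℂ) : AddSubgroup ℂ where
  carrier := {z : ℂ | ∃ m n : ℤ, z = m * ω₁ + n * ω₂}
  zero_mem' := ⟨0, 0, by simp⟩
  add_mem' := by
    rintro x y ⟨m, n, rfl⟩ ⟨m', n', rfl⟩
    exact ⟨m + m', n + n', by push_cast; ring⟩
  neg_mem' := by
    rintro x ⟨m, n, rfl⟩
    exact ⟨-m, -n, by push_cast; ring⟩

/-- For `r ∈ ℂ` with `r·Λ ⊆ Λ`, the map `r̄ : ℂ/Λ → ℂ/Λ`, `[a] ↦ [r·a]`, induced by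
multiplication by `r`. -/
noncomputable def rbar (ω₁ ω₂ r : ℂ)
    (hr : ∀ α ∈ lattice ω₁ ω₂, r * α ∈ lattice ω₁ ω₂) :
    ℂ ⧸ lattice ω₁ ω₂ → ℂ ⧸ lattice ω₁ ω₂ :=
  Quotient.map' (fun z => r * z) (fun x y hxy => by
    rw [QuotientAddGroup.leftRel_apply] at hxy ⊢
    have h : -(r * x) + r * y = r * (-x + y) := by ring
    rw [h]
    exact hr _ hxy)

/-- The set `R = {r : r·Λ ⊆ Λ}` is closed under `r - s + t`. -/
theorem sub_add_mem_R {ω₁ ω₂ r s t : ℂ}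
    (hr : ∀ α ∈ lattice ω₁ ω₂, r * α ∈ lattice ω₁ ω₂)
    (hs : ∀ α ∈ lattice ω₁ ω₂, s * α ∈ lattice ω₁ ω₂)
    (ht : ∀ α ∈ lattice ω₁ ω₂, t * α ∈ lattice ω₁ ω₂) :
    ∀ α ∈ lattice ω₁ ω₂, (r - s + t) * α ∈ lattice ω₁ ω₂ := fun α hα => by
  have h : (r - s + t) * α = r * α - s * α + t * α := by ring
  rw [h]
  exact add_mem (sub_mem (hr α hα) (hs α hα)) (ht α hα)

/-- The set `R = {r : r·Λ ⊆ Λ}` is closed under multiplication. -/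
theorem mul_mem_R {ω₁ ω₂ r s : ℂ}
    (hr : ∀ α ∈ lattice ω₁ ω₂, r * α ∈ lattice ω₁ ω₂)
    (hs : ∀ α ∈ lattice ω₁ ω₂, s * α ∈ lattice ω₁ ω₂) :
    ∀ α ∈ lattice ω₁ ω₂, (r * s) * α ∈ lattice ω₁ ω₂ := fun α hα => by
  rw [mul_assoc]; exact hr _ (hs _ hα)

/-- The multiplier ring `R = {r ∈ ℂ : r·Λ ⊆ Λ}` as a subtype. -/
def Rmul (ω₁ ω₂ : ℂ) : Type :=
  {r : ℂ // ∀ α ∈ lattice ω₁ ω₂, r * α ∈ lattice ω₁ ω₂}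

/-- The crossed-product multiplication `(r, A)·(s, B) = (r·s, A - r̄ O + r̄ B)` on
`R × (ℂ/Λ)`. -/
noncomputable def tmul (ω₁ ω₂ : ℂ) (O : ℂ ⧸ lattice ω₁ ω₂)
    (x y : Rmul ω₁ ω₂ × (ℂ ⧸ lattice ω₁ ω₂)) : Rmul ω₁ ω₂ × (ℂ ⧸ lattice ω₁ ω₂) :=
  (⟨x.1.1 * y.1.1, mul_mem_R x.1.2 y.1.2⟩,
    x.2 - rbar ω₁ ω₂ x.1.1 x.1.2 O + rbar ω₁ ω₂ x.1.1 x.1.2 y.2)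

/-- The componentwise heap operation `[(r,A),(s,B),(t,C)] = (r - s + t, A - B + C)` on
`R × (ℂ/Λ)`. -/
noncomputable def theap (ω₁ ω₂ : ℂ) (x y z : Rmul ω₁ ω₂ × (ℂ ⧸ lattice ω₁ ω₂)) :
    Rmul ω₁ ω₂ × (ℂ ⧸ lattice ω₁ ω₂) :=
  (⟨x.1.1 - y.1.1 + z.1.1, sub_add_mem_R x.1.2 y.1.2 z.1.2⟩, x.2 - y.2 + z.2)


lemma rbar_mk (ω₁ ω₂ r : ℂ) (hr : ∀ α ∈ lattice ω₁ ω₂, r * α ∈ lattice ω₁ ω₂) (a : ℂ) :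
    rbar ω₁ ω₂ r hr (QuotientAddGroup.mk a) = QuotientAddGroup.mk (r * a) := rfl

lemma rbar_mul (ω₁ ω₂ r s : ℂ)
    (hr : ∀ α ∈ lattice ω₁ ω₂, r * α ∈ lattice ω₁ ω₂)
    (hs : ∀ α ∈ lattice ω₁ ω₂, s * α ∈ lattice ω₁ ω₂)
    (h : ∀ α ∈ lattice ω₁ ω₂, (r * s) * α ∈ lattice ω₁ ω₂)
    (A : ℂ ⧸ lattice ω₁ ω₂) :
    rbar ω₁ ω₂ (r * s) h A = rbar ω₁ ω₂ r hr (rbar ω₁ ω₂ s hs A) := by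
  induction A using QuotientAddGroup.induction_on with
  | H a => rw [rbar_mk, rbar_mk, rbar_mk, mul_assoc]

lemma rbar_heap (ω₁ ω₂ r : ℂ) (hr : ∀ α ∈ lattice ω₁ ω₂, r * α ∈ lattice ω₁ ω₂)
    (A B C : ℂ ⧸ lattice ω₁ ω₂) :
    rbar ω₁ ω₂ r hr (A - B + C)
      = rbar ω₁ ω₂ r hr A - rbar ω₁ ω₂ r hr B + rbar ω₁ ω₂ r hr C := by
  induction A using QuotientAddGroup.induction_on with
  | H a =>
  induction B using QuotientAddGroup.induction_on with
  | H b =>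
  induction C using QuotientAddGroup.induction_on with
  | H c =>
  have : (QuotientAddGroup.mk a - QuotientAddGroup.mk b + QuotientAddGroup.mk c :
      ℂ ⧸ lattice ω₁ ω₂) = QuotientAddGroup.mk (a - b + c) := by
    rw [← QuotientAddGroup.mk_sub, ← QuotientAddGroup.mk_add]
  rw [this, rbar_mk, rbar_mk, rbar_mk, rbar_mk,
    ← QuotientAddGroup.mk_sub, ← QuotientAddGroup.mk_add]
  congr 1
  ring

lemma rbar_heap_coef (ω₁ ω₂ r s t : ℂ)
    (hr : ∀ α ∈ lattice ω₁ ω₂, r * α ∈ lattice ω₁ ω₂)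
    (hs : ∀ α ∈ lattice ω₁ ω₂, s * α ∈ lattice ω₁ ω₂)
    (ht : ∀ α ∈ lattice ω₁ ω₂, t * α ∈ lattice ω₁ ω₂)
    (h : ∀ α ∈ lattice ω₁ ω₂, (r - s + t) * α ∈ lattice ω₁ ω₂)
    (A : ℂ ⧸ lattice ω₁ ω₂) :
    rbar ω₁ ω₂ (r - s + t) h A
      = rbar ω₁ ω₂ r hr A - rbar ω₁ ω₂ s hs A + rbar ω₁ ω₂ t ht A := by
  induction A using QuotientAddGroup.induction_on with
  | H a =>
  rw [rbar_mk, rbar_mk, rbar_mk, rbar_mk,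
    ← QuotientAddGroup.mk_sub, ← QuotientAddGroup.mk_add]
  congr 1
  ring

/-- The multiplication `(r, A)·(s, B) = (r·s, A - r̄ O + r̄ B)` on `R × (ℂ/Λ)` is associative
and distributes on both sides over the componentwise heap operation, making `R × (ℂ/Λ)` a
truss. -/
theorem crossed_product_truss (ω₁ ω₂ : ℂ) (hτ : 0 < (ω₁ / ω₂).im)
    (O : ℂ ⧸ lattice ω₁ ω₂) :
    (∀ x y z : Rmul ω₁ ω₂ × (ℂ ⧸ lattice ω₁ ω₂),
      tmul ω₁ ω₂ O (tmul ω₁ ω₂ O x y) z = tmul ω₁ ω₂ O x (tmul ω₁ ω₂ O y z)) ∧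
    (∀ x y z w : Rmul ω₁ ω₂ × (ℂ ⧸ lattice ω₁ ω₂),
      tmul ω₁ ω₂ O x (theap ω₁ ω₂ y z w) =
        theap ω₁ ω₂ (tmul ω₁ ω₂ O x y) (tmul ω₁ ω₂ O x z) (tmul ω₁ ω₂ O x w)) ∧
    (∀ x y z w : Rmul ω₁ ω₂ × (ℂ ⧸ lattice ω₁ ω₂),
      tmul ω₁ ω₂ O (theap ω₁ ω₂ x y z) w =
        theap ω₁ ω₂ (tmul ω₁ ω₂ O x w) (tmul ω₁ ω₂ O y w) (tmul ω₁ ω₂ O z w)) := by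
  refine ⟨fun x y z => ?_, fun x y z w => ?_, fun x y z w => ?_⟩
  · refine Prod.ext (Subtype.ext ?_) ?_ <;> simp only [tmul, theap]
    · exact mul_assoc _ _ _
    · rw [rbar_mul ω₁ ω₂ _ _ x.1.2 y.1.2 (mul_mem_R x.1.2 y.1.2),
        rbar_mul ω₁ ω₂ _ _ x.1.2 y.1.2 (mul_mem_R x.1.2 y.1.2), rbar_heap]
      abel
  · refine Prod.ext (Subtype.ext ?_) ?_ <;> simp only [tmul, theap]
    · ring
    · rw [rbar_heap]
      abel
  · refine Prod.ext (Subtype.ext ?_) ?_ <;> simp only [tmul, theap]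
    · ring
    · rw [rbar_heap_coef ω₁ ω₂ _ _ _ x.1.2 y.1.2 z.1.2 (sub_add_mem_R x.1.2 y.1.2 z.1.2),
        rbar_heap_coef ω₁ ω₂ _ _ _ x.1.2 y.1.2 z.1.2 (sub_add_mem_R x.1.2 y.1.2 z.1.2)]
      abel
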